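/- The left composition of packed words satisfies the sequential (nested) associativity axiom: for packed words u with letter set {1,…,n}, v with letter set {1,…,m}, w with letter set {1,…,p}, and indices i ∈ {1,…,n}, j ∈ {1,…,m}, one has (u ∘←_i v) ∘←_{i+j−1} w = u ∘←_i (v ∘←_j w). -/

import Mathlib

/-- Increment by `α` every letter strictly greater than `β`. -/
def Inc (α β : ℕ) (u : List ℕ) : List ℕ := u.map fun a => if β < a then a + α else a

/-- Maximal letter of a word. -/
def maxLetter (v : List ℕ) : ℕ := v.foldr max 0

/-- A packed word whose letter set is exactly `{1, …, k}`. -/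
def IsPackedOn (k : ℕ) (w : List ℕ) : Prop := w.toFinset = Finset.Icc 1 k

/-- A packed word. -/
def IsPacked (w : List ℕ) : Prop := ∃ k, IsPackedOn k w

/-- A permutation of `{1, …, n}` identified with the word `σ(1) ⋯ σ(n)`. -/
def IsPermWord (n : ℕ) (σ : List ℕ) : Prop :=
  σ.length = n ∧ σ.toFinset = Finset.Icc 1 n

/-- `σ` is the standardization of `w`: a permutation word of `{1, …, n}` with the same
inversions as `w` (0-based indexing). -/
def IsStdOf (w σ : List ℕ) : Prop :=
  IsPermWord w.length σ ∧
    ∀ i j : ℕ, i < j → j < w.length →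
      (w.getD j 0 < w.getD i 0 ↔ σ.getD j 0 < σ.getD i 0)

/-- The weakly increasing rearrangement (composition type) of a word. -/
def chi (w : List ℕ) : List ℕ := List.insertionSort (· ≤ ·) w

/-- Right composition `u ∘→_i v` of packed words (`i` is 1-based). -/
def rightComp (u : List ℕ) (i : ℕ) (v : List ℕ) : List ℕ :=
  Inc (maxLetter v - 1) (u.getD (i - 1) 0) (u.take (i - 1))
    ++ Inc (u.getD (i - 1) 0 - 1) 0 v
    ++ Inc (maxLetter v - 1) (u.getD (i - 1) 0 - 1) (u.drop i)

/-- Left composition `u ∘←_i v` of packed words: replace in `Inc (m-1) i u` every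
occurrence of the letter `i` by the word `Inc (i-1) 0 v`, where `m` is the maximal
letter of `v`. -/
def leftComp (u : List ℕ) (i : ℕ) (v : List ℕ) : List ℕ :=
  u.flatMap fun a =>
    if a = i then Inc (i - 1) 0 v else [if i < a then a + (maxLetter v - 1) else a]

/-- Block composition `B_i(α, β)` of permutation words (`i` is 1-based, `β` a permutation
of `{1, …, m}` with `m = β.length`). -/
def blockComp (α : List ℕ) (i : ℕ) (β : List ℕ) : List ℕ :=
  Inc (β.length - 1) (α.getD (i - 1) 0) (α.take (i - 1))
    ++ Inc (α.getD (i - 1) 0 - 1) 0 β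
    ++ Inc (β.length - 1) (α.getD (i - 1) 0 - 1) (α.drop i)

/-- The inverse of a permutation word. -/
def invWord (σ : List ℕ) : List ℕ :=
  (List.range σ.length).map fun p => σ.idxOf (p + 1) + 1

/-- The right action of a permutation word `σ` of `{1, …, n}` on a packed word with
letter set `{1, …, n}`: the `p`-th letter of `u · σ` is `σ⁻¹(u(p))`. -/
def permAct (u σ : List ℕ) : List ℕ := u.map fun a => (invWord σ).getD (a - 1) 0

/-- The identity permutation word of `{1, …, m}`. -/
def idWord (m : ℕ) : List ℕ := (List.range m).map (· + 1)

/-- `First k u`: keep only the `k` leftmost occurrences of each letter of `u`. -/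
def First (k : ℕ) (u : List ℕ) : List ℕ :=
  (List.range u.length).filterMap fun p =>
    if (u.take p).count (u.getD p 0) < k then some (u.getD p 0) else none


/-!
Left composition substitutes a word for each letter of `u` (`List.flatMap`), so both sides
are substitutions into `u` and it suffices to compare the images of a single letter `a`.
For `a = i` this says that left composition commutes with the shift `Inc (i - 1) 0`; for
`a ≠ i` the letter is shifted by `(m - 1) + (p - 1)` on the left and by
`max (v ∘←_j w) - 1 = m + p - 2` on the right.
-/

lemma maxLetter_le {l : List ℕ} {k : ℕ} (h : ∀ a ∈ l, a ≤ k) : maxLetter l ≤ k :=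
  List.max_le_of_forall_le l k h

lemma le_maxLetter {l : List ℕ} {a : ℕ} (h : a ∈ l) : a ≤ maxLetter l :=
  List.le_max_of_le h le_rfl

lemma maxLetter_mem {l : List ℕ} (h : l ≠ []) : maxLetter l ∈ l :=
  List.maximum_mem (List.foldr_max_of_ne_nil h).symm

lemma IsPackedOn.mem_iff {k : ℕ} {l : List ℕ} (h : IsPackedOn k l) {a : ℕ} :
    a ∈ l ↔ 1 ≤ a ∧ a ≤ k := by
  rw [← List.mem_toFinset, h, Finset.mem_Icc]

lemma Inc_zero_Inc_zero (s t : ℕ) (w : List ℕ) : Inc s 0 (Inc t 0 w) = Inc (t + s) 0 w := by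
  simp only [Inc, List.map_map]
  congr 1
  funext c
  simp only [Function.comp_apply]
  split_ifs <;> omega

lemma leftComp_flatMap {α : Type*} (l : List α) (f : α → List ℕ) (k : ℕ) (w : List ℕ) :
    leftComp (l.flatMap f) k w = l.flatMap fun a => leftComp (f a) k w :=
  List.flatMap_assoc

lemma leftComp_singleton (a i : ℕ) (v : List ℕ) :
    leftComp [a] i v =
      if a = i then Inc (i - 1) 0 v else [if i < a then a + (maxLetter v - 1) else a] :=
  List.flatMap_singleton _ _

lemma leftComp_eq_flatMap (u : List ℕ) (i : ℕ) (v : List ℕ) :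
    leftComp u i v = u.flatMap fun a => leftComp [a] i v := by
  simp only [leftComp_singleton]
  rfl

lemma maxLetter_leftComp {j : ℕ} {v w : List ℕ} (hj : 1 ≤ j) (hjv : j ∈ v)
    (hw : 1 ≤ maxLetter w) :
    maxLetter (leftComp v j w) = maxLetter v + maxLetter w - 1 := by
  have hjM := le_maxLetter hjv
  apply le_antisymm
  · refine maxLetter_le fun a ha => ?_
    obtain ⟨b, hb, hab⟩ := List.mem_flatMap.mp ha
    have hbM := le_maxLetter hb
    by_cases hbj : b = j
    · rw [if_pos hbj] at hab
      obtain ⟨c, hc, rfl⟩ := List.mem_map.mp hab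
      have hcP := le_maxLetter hc
      split_ifs <;> omega
    · rw [if_neg hbj, List.mem_singleton] at hab
      split_ifs at hab <;> omega
  · have hMv := maxLetter_mem (List.ne_nil_of_mem hjv)
    refine le_maxLetter (List.mem_flatMap.mpr ⟨_, hMv, ?_⟩)
    by_cases hMj : maxLetter v = j
    · have hPw := maxLetter_mem (l := w) (by rintro rfl; simp [maxLetter] at hw)
      rw [if_pos hMj]
      exact List.mem_map.mpr ⟨_, hPw, by rw [if_pos (by omega)]; omega⟩
    · rw [if_neg hMj, if_pos (by omega)]
      exact List.mem_singleton.mpr (by omega)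

lemma leftComp_Inc_zero (s : ℕ) {j : ℕ} (hj : 1 ≤ j) (v w : List ℕ) :
    leftComp (Inc s 0 v) (j + s) w = Inc s 0 (leftComp v j w) := by
  simp only [leftComp, Inc, List.flatMap_map, List.map_flatMap]
  congr 1
  funext b
  by_cases hbj : b = j
  · have hb : 0 < b := by omega
    rw [if_pos hbj, if_pos hb, if_pos (by omega), ← Inc, ← Inc, ← Inc, Inc_zero_Inc_zero]
    congr 1
    omega
  · have hbs : (if 0 < b then b + s else b) ≠ j + s := by split_ifs <;> omega
    rw [if_neg hbj, if_neg hbs, List.map_singleton]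
    congr 1
    split_ifs <;> omega

theorem leftComp_leftComp {i j : ℕ} (u : List ℕ) {v w : List ℕ} (hi : 1 ≤ i) (hj : 1 ≤ j)
    (hjv : j ∈ v) (hw : 1 ≤ maxLetter w) :
    leftComp (leftComp u i v) (i + j - 1) w = leftComp u i (leftComp v j w) := by
  have hM := maxLetter_leftComp hj hjv hw
  have hjM := le_maxLetter hjv
  rw [leftComp_eq_flatMap u i v, leftComp_flatMap, leftComp_eq_flatMap u i]
  congr 1
  funext a
  simp only [leftComp_singleton]
  by_cases hai : a = i
  · subst hai
    rw [if_pos rfl, if_pos rfl, show a + j - 1 = j + (a - 1) by omega]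
    exact leftComp_Inc_zero _ hj _ _
  · have ha' : (if i < a then a + (maxLetter v - 1) else a) ≠ i + j - 1 := by
      split_ifs <;> omega
    rw [if_neg hai, if_neg hai, leftComp_singleton, if_neg ha', hM]
    congr 1
    split_ifs <;> omega

theorem leftComp_sequential_assoc_general (n m p i j : ℕ) (u v w : List ℕ)
    (hv : IsPackedOn m v) (hw : IsPackedOn p w)
    (hi : i ∈ Finset.Icc 1 n) (hj : j ∈ Finset.Icc 1 m) (hp : 1 ≤ p) :
    leftComp (leftComp u i v) (i + j - 1) w = leftComp u i (leftComp v j w) := by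
  rw [Finset.mem_Icc] at hi hj
  have hjv : j ∈ v := hv.mem_iff.mpr hj
  have hpw : p ∈ w := hw.mem_iff.mpr ⟨hp, le_rfl⟩
  exact leftComp_leftComp u hi.1 hj.1 hjv (hp.trans (le_maxLetter hpw))

/-- Sequential (nested) associativity for the left composition of packed words. -/
theorem leftComp_sequential_assoc (n m p i j : ℕ) (u v w : List ℕ)
    (hu : IsPackedOn n u) (hv : IsPackedOn m v) (hw : IsPackedOn p w)
    (hi : i ∈ Finset.Icc 1 n) (hj : j ∈ Finset.Icc 1 m) (hp : 1 ≤ p) :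
    leftComp (leftComp u i v) (i + j - 1) w = leftComp u i (leftComp v j w) :=
  leftComp_sequential_assoc_general n m p i j u v w hv hw hi hj hp
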